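/- The linear system of quartic surfaces in P^3 containing the six lines {x_1=x_3=0}, {x_0=x_2=0}, {x_0=x_1=0}, {x_2=x_3=0}, {x_0-x_2=x_1-x_3=0}, {x_0-x_1=x_2-x_3=0} has projective dimension 13; that is, the vector space of homogeneous quartic polynomials in x_0,x_1,x_2,x_3 vanishing identically on these six lines has dimension 14. -/

import Mathlib

open MvPolynomial

/-- Membership in the union of the six lines `{x₁=x₃=0}`, `{x₀=x₂=0}`, `{x₀=x₁=0}`,
`{x₂=x₃=0}`, `{x₀-x₂=x₁-x₃=0}`, `{x₀-x₁=x₂-x₃=0}` in `ℙ³` (in affine coordinates). -/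
def onSixLines (x : Fin 4 → ℂ) : Prop :=
  (x 1 = 0 ∧ x 3 = 0) ∨ (x 0 = 0 ∧ x 2 = 0) ∨ (x 0 = 0 ∧ x 1 = 0) ∨
  (x 2 = 0 ∧ x 3 = 0) ∨ (x 0 = x 2 ∧ x 1 = x 3) ∨ (x 0 = x 1 ∧ x 2 = x 3)

/-- The space of homogeneous quartic polynomials in `x₀,x₁,x₂,x₃` vanishing
identically on the six lines. -/
noncomputable def quarticsOnLines : Submodule ℂ (MvPolynomial (Fin 4) ℂ) :=
  MvPolynomial.homogeneousSubmodule (Fin 4) ℂ 4 ⊓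
    ⨅ (x : Fin 4 → ℂ) (_ : onSixLines x),
      LinearMap.ker (MvPolynomial.aeval (R := ℂ) x).toLinearMap

namespace Stmt15Aux

noncomputable section

abbrev Pl := MvPolynomial (Fin 4) ℂ

def e (a b c d : ℕ) : Fin 4 →₀ ℕ :=
  Finsupp.single 0 a + Finsupp.single 1 b + Finsupp.single 2 c + Finsupp.single 3 d

lemma e_apply0 (a b c d : ℕ) : e a b c d 0 = a := by simp [e, Finsupp.single_apply]
lemma e_apply1 (a b c d : ℕ) : e a b c d 1 = b := by simp [e, Finsupp.single_apply]
lemma e_apply2 (a b c d : ℕ) : e a b c d 2 = c := by simp [e, Finsupp.single_apply]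
lemma e_apply3 (a b c d : ℕ) : e a b c d 3 = d := by simp [e, Finsupp.single_apply]

lemma e_eq_iff {a b c d a' b' c' d' : ℕ} :
    e a b c d = e a' b' c' d' ↔ (a = a' ∧ b = b' ∧ c = c' ∧ d = d') := by
  constructor
  · intro h
    exact ⟨by simpa [e_apply0] using congrArg (fun f => f 0) h,
      by simpa [e_apply1] using congrArg (fun f => f 1) h,
      by simpa [e_apply2] using congrArg (fun f => f 2) h,
      by simpa [e_apply3] using congrArg (fun f => f 3) h⟩
  · rintro ⟨rfl, rfl, rfl, rfl⟩; rfl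

def v0 : Fin 35 → ℕ := ![4, 3, 3, 3, 2, 2, 2, 2, 2, 2, 1, 1, 1, 1, 1, 1, 1, 1, 1, 1, 0, 0, 0, 0, 0, 0, 0, 0, 0, 0, 0, 0, 0, 0, 0]

def v1 : Fin 35 → ℕ := ![0, 1, 0, 0, 2, 1, 1, 0, 0, 0, 3, 2, 2, 1, 1, 1, 0, 0, 0, 0, 4, 3, 3, 2, 2, 2, 1, 1, 1, 1, 0, 0, 0, 0, 0]

def v2 : Fin 35 → ℕ := ![0, 0, 1, 0, 0, 1, 0, 2, 1, 0, 0, 1, 0, 2, 1, 0, 3, 2, 1, 0, 0, 1, 0, 2, 1, 0, 3, 2, 1, 0, 4, 3, 2, 1, 0]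

def v3 : Fin 35 → ℕ := ![0, 0, 0, 1, 0, 0, 1, 0, 1, 2, 0, 0, 1, 0, 1, 2, 0, 1, 2, 3, 0, 0, 1, 0, 1, 2, 0, 1, 2, 3, 0, 1, 2, 3, 4]

def mexp (j : Fin 35) : Fin 4 →₀ ℕ := e (v0 j) (v1 j) (v2 j) (v3 j)

lemma mexp_inj : Function.Injective mexp := by
  intro j k h
  rw [mexp, mexp, e_eq_iff] at h
  revert h; revert j k; decide

def S : Finset (Fin 4 →₀ ℕ) := Finset.univ.image mexp

lemma mem_S (a b c d : ℕ) (h : a + b + c + d = 4) : e a b c d ∈ S := by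
  have ha : a ≤ 4 := by omega
  have hb : b ≤ 4 := by omega
  have hc : c ≤ 4 := by omega
  have hd : d ≤ 4 := by omega
  interval_cases a <;> interval_cases b <;> interval_cases c <;> interval_cases d <;>
    first
    | omega
    | (simp only [S, Finset.mem_image, Finset.mem_univ, true_and, mexp, e_eq_iff]
       decide)

lemma hsupp {p : Pl} (hp : p.IsHomogeneous 4) : p.support ⊆ S := by
  intro m hm
  have h4 : m.degree = 4 := by
    rw [Finsupp.degree_eq_weight_one]
    exact hp (mem_support_iff.mp hm)
  have h2 : m.degree = ∑ i : Fin 4, m i :=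
    Finset.sum_subset (Finset.subset_univ _) (fun i _ h => Finsupp.notMem_support_iff.mp h)
  rw [Fin.sum_univ_four] at h2
  have hme : m = e (m 0) (m 1) (m 2) (m 3) := by
    ext i; fin_cases i <;> simp [e_apply0, e_apply1, e_apply2, e_apply3]
  rw [hme]
  exact mem_S _ _ _ _ (by omega)

lemma hrep {p : Pl} (hp : p.IsHomogeneous 4) :
    p = ∑ j : Fin 35, monomial (mexp j) (coeff (mexp j) p) := by
  conv_lhs => rw [p.as_sum]
  rw [Finset.sum_subset (hsupp hp) (fun m _ hm => by
    rw [notMem_support_iff.mp hm, monomial_zero])]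
  exact Finset.sum_image (fun j _ k _ h => mexp_inj h)

lemma mon_eq (a b c d : ℕ) (r : ℂ) :
    (monomial (e a b c d) r : Pl) = C r * X 0 ^ a * X 1 ^ b * X 2 ^ c * X 3 ^ d := by
  rw [C_apply, X_pow_eq_monomial, X_pow_eq_monomial, X_pow_eq_monomial, X_pow_eq_monomial,
    monomial_mul, monomial_mul, monomial_mul, monomial_mul, e]
  simp

lemma aeval_mon (x : Fin 4 → ℂ) (a b c d : ℕ) (r : ℂ) :
    aeval x (monomial (e a b c d) r : Pl) = r * x 0 ^ a * x 1 ^ b * x 2 ^ c * x 3 ^ d := by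
  simp [mon_eq]

lemma hmon (a b c d : ℕ) (h : a + b + c + d = 4) (r : ℂ) :
    (monomial (e a b c d) r : Pl).IsHomogeneous 4 := by
  apply isHomogeneous_monomial
  have : (e a b c d).degree = ∑ i : Fin 4, e a b c d i :=
    Finset.sum_subset (Finset.subset_univ _) (fun i _ h => Finsupp.notMem_support_iff.mp h)
  rw [this, Fin.sum_univ_four, e_apply0, e_apply1, e_apply2, e_apply3]
  exact h

lemma coeff_e_mon (a b c d a' b' c' d' : ℕ) (r : ℂ) :
    coeff (e a b c d) (monomial (e a' b' c' d') r : Pl) =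
      if a' = a ∧ b' = b ∧ c' = c ∧ d' = d then r else 0 := by
  rw [coeff_monomial]
  exact if_congr e_eq_iff rfl rfl

set_option maxHeartbeats 1000000 in
lemma hexp {p : Pl} (hp : p.IsHomogeneous 4) (x : Fin 4 → ℂ) :
    aeval x p =
      coeff (e 4 0 0 0) p * x 0 ^ 4 * x 1 ^ 0 * x 2 ^ 0 * x 3 ^ 0 +
      coeff (e 3 1 0 0) p * x 0 ^ 3 * x 1 ^ 1 * x 2 ^ 0 * x 3 ^ 0 +
      coeff (e 3 0 1 0) p * x 0 ^ 3 * x 1 ^ 0 * x 2 ^ 1 * x 3 ^ 0 +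
      coeff (e 3 0 0 1) p * x 0 ^ 3 * x 1 ^ 0 * x 2 ^ 0 * x 3 ^ 1 +
      coeff (e 2 2 0 0) p * x 0 ^ 2 * x 1 ^ 2 * x 2 ^ 0 * x 3 ^ 0 +
      coeff (e 2 1 1 0) p * x 0 ^ 2 * x 1 ^ 1 * x 2 ^ 1 * x 3 ^ 0 +
      coeff (e 2 1 0 1) p * x 0 ^ 2 * x 1 ^ 1 * x 2 ^ 0 * x 3 ^ 1 +
      coeff (e 2 0 2 0) p * x 0 ^ 2 * x 1 ^ 0 * x 2 ^ 2 * x 3 ^ 0 +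
      coeff (e 2 0 1 1) p * x 0 ^ 2 * x 1 ^ 0 * x 2 ^ 1 * x 3 ^ 1 +
      coeff (e 2 0 0 2) p * x 0 ^ 2 * x 1 ^ 0 * x 2 ^ 0 * x 3 ^ 2 +
      coeff (e 1 3 0 0) p * x 0 ^ 1 * x 1 ^ 3 * x 2 ^ 0 * x 3 ^ 0 +
      coeff (e 1 2 1 0) p * x 0 ^ 1 * x 1 ^ 2 * x 2 ^ 1 * x 3 ^ 0 +
      coeff (e 1 2 0 1) p * x 0 ^ 1 * x 1 ^ 2 * x 2 ^ 0 * x 3 ^ 1 +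
      coeff (e 1 1 2 0) p * x 0 ^ 1 * x 1 ^ 1 * x 2 ^ 2 * x 3 ^ 0 +
      coeff (e 1 1 1 1) p * x 0 ^ 1 * x 1 ^ 1 * x 2 ^ 1 * x 3 ^ 1 +
      coeff (e 1 1 0 2) p * x 0 ^ 1 * x 1 ^ 1 * x 2 ^ 0 * x 3 ^ 2 +
      coeff (e 1 0 3 0) p * x 0 ^ 1 * x 1 ^ 0 * x 2 ^ 3 * x 3 ^ 0 +
      coeff (e 1 0 2 1) p * x 0 ^ 1 * x 1 ^ 0 * x 2 ^ 2 * x 3 ^ 1 +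
      coeff (e 1 0 1 2) p * x 0 ^ 1 * x 1 ^ 0 * x 2 ^ 1 * x 3 ^ 2 +
      coeff (e 1 0 0 3) p * x 0 ^ 1 * x 1 ^ 0 * x 2 ^ 0 * x 3 ^ 3 +
      coeff (e 0 4 0 0) p * x 0 ^ 0 * x 1 ^ 4 * x 2 ^ 0 * x 3 ^ 0 +
      coeff (e 0 3 1 0) p * x 0 ^ 0 * x 1 ^ 3 * x 2 ^ 1 * x 3 ^ 0 +
      coeff (e 0 3 0 1) p * x 0 ^ 0 * x 1 ^ 3 * x 2 ^ 0 * x 3 ^ 1 +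
      coeff (e 0 2 2 0) p * x 0 ^ 0 * x 1 ^ 2 * x 2 ^ 2 * x 3 ^ 0 +
      coeff (e 0 2 1 1) p * x 0 ^ 0 * x 1 ^ 2 * x 2 ^ 1 * x 3 ^ 1 +
      coeff (e 0 2 0 2) p * x 0 ^ 0 * x 1 ^ 2 * x 2 ^ 0 * x 3 ^ 2 +
      coeff (e 0 1 3 0) p * x 0 ^ 0 * x 1 ^ 1 * x 2 ^ 3 * x 3 ^ 0 +
      coeff (e 0 1 2 1) p * x 0 ^ 0 * x 1 ^ 1 * x 2 ^ 2 * x 3 ^ 1 +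
      coeff (e 0 1 1 2) p * x 0 ^ 0 * x 1 ^ 1 * x 2 ^ 1 * x 3 ^ 2 +
      coeff (e 0 1 0 3) p * x 0 ^ 0 * x 1 ^ 1 * x 2 ^ 0 * x 3 ^ 3 +
      coeff (e 0 0 4 0) p * x 0 ^ 0 * x 1 ^ 0 * x 2 ^ 4 * x 3 ^ 0 +
      coeff (e 0 0 3 1) p * x 0 ^ 0 * x 1 ^ 0 * x 2 ^ 3 * x 3 ^ 1 +
      coeff (e 0 0 2 2) p * x 0 ^ 0 * x 1 ^ 0 * x 2 ^ 2 * x 3 ^ 2 +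
      coeff (e 0 0 1 3) p * x 0 ^ 0 * x 1 ^ 0 * x 2 ^ 1 * x 3 ^ 3 +
      coeff (e 0 0 0 4) p * x 0 ^ 0 * x 1 ^ 0 * x 2 ^ 0 * x 3 ^ 4 := by
  conv_lhs => rw [hrep hp]
  simp only [map_sum]
  simp only [Fin.sum_univ_succ, Finset.univ_eq_empty, Finset.sum_empty, mexp,
    v0, v1, v2, v3, Matrix.cons_val_zero, Matrix.cons_val_one, Matrix.head_cons,
    Matrix.cons_val_succ, add_zero]
  simp only [aeval_mon]
  ring

def Q0 : Pl := monomial (e 3 0 0 1) (-1 : ℂ) + monomial (e 2 1 1 0) (1 : ℂ)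

def Q1 : Pl := monomial (e 3 0 0 1) (1 : ℂ) + monomial (e 2 1 0 1) (-1 : ℂ) + monomial (e 2 0 1 1) (-1 : ℂ) + monomial (e 2 0 0 2) (1 : ℂ)

def Q2 : Pl := monomial (e 2 1 0 1) (-1 : ℂ) + monomial (e 1 2 1 0) (1 : ℂ)

def Q3 : Pl := monomial (e 2 0 1 1) (-1 : ℂ) + monomial (e 1 1 2 0) (1 : ℂ)

def Q4 : Pl := monomial (e 3 0 0 1) (1 : ℂ) + monomial (e 2 1 0 1) (-1 : ℂ) + monomial (e 2 0 1 1) (-1 : ℂ) + monomial (e 1 1 1 1) (1 : ℂ)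

def Q5 : Pl := monomial (e 3 0 0 1) (1 : ℂ) + monomial (e 2 0 1 1) (-1 : ℂ) + monomial (e 1 2 0 1) (-1 : ℂ) + monomial (e 1 1 0 2) (1 : ℂ)

def Q6 : Pl := monomial (e 3 0 0 1) (1 : ℂ) + monomial (e 2 1 0 1) (-1 : ℂ) + monomial (e 1 0 2 1) (-1 : ℂ) + monomial (e 1 0 1 2) (1 : ℂ)

def Q7 : Pl := monomial (e 3 0 0 1) (1 : ℂ) + monomial (e 1 2 0 1) (-1 : ℂ) + monomial (e 1 0 2 1) (-1 : ℂ) + monomial (e 1 0 0 3) (1 : ℂ)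

def Q8 : Pl := monomial (e 1 2 0 1) (-1 : ℂ) + monomial (e 0 3 1 0) (1 : ℂ)

def Q9 : Pl := monomial (e 3 0 0 1) (1 : ℂ) + monomial (e 2 1 0 1) (-1 : ℂ) + monomial (e 2 0 1 1) (-1 : ℂ) + monomial (e 0 2 2 0) (1 : ℂ)

def Q10 : Pl := monomial (e 3 0 0 1) (1 : ℂ) + monomial (e 2 0 1 1) (-1 : ℂ) + monomial (e 1 2 0 1) (-1 : ℂ) + monomial (e 0 2 1 1) (1 : ℂ)

def Q11 : Pl := monomial (e 1 0 2 1) (-1 : ℂ) + monomial (e 0 1 3 0) (1 : ℂ)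

def Q12 : Pl := monomial (e 3 0 0 1) (1 : ℂ) + monomial (e 2 1 0 1) (-1 : ℂ) + monomial (e 1 0 2 1) (-1 : ℂ) + monomial (e 0 1 2 1) (1 : ℂ)

def Q13 : Pl := monomial (e 3 0 0 1) (1 : ℂ) + monomial (e 1 2 0 1) (-1 : ℂ) + monomial (e 1 0 2 1) (-1 : ℂ) + monomial (e 0 1 1 2) (1 : ℂ)

def q : Fin 14 → Pl := ![Q0, Q1, Q2, Q3, Q4, Q5, Q6, Q7, Q8, Q9, Q10, Q11, Q12, Q13]

def fm : Fin 14 → (Fin 4 →₀ ℕ) := ![e 2 1 1 0, e 2 0 0 2, e 1 2 1 0, e 1 1 2 0, e 1 1 1 1, e 1 1 0 2, e 1 0 1 2, e 1 0 0 3, e 0 3 1 0, e 0 2 2 0, e 0 2 1 1, e 0 1 3 0, e 0 1 2 1, e 0 1 1 2]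

lemma hQ0hom : (Q0).IsHomogeneous 4 := by
  exact (hmon 3 0 0 1 (by norm_num) (-1 : ℂ)).add (hmon 2 1 1 0 (by norm_num) (1 : ℂ))

lemma hQ0van (x : Fin 4 → ℂ) (hx : onSixLines x) : aeval x Q0 = 0 := by
  simp only [Q0, map_add, aeval_mon]
  rcases hx with (⟨h1,h2⟩|⟨h1,h2⟩|⟨h1,h2⟩|⟨h1,h2⟩|⟨h1,h2⟩|⟨h1,h2⟩) <;> rw [h1, h2] <;> ring

lemma hQ1hom : (Q1).IsHomogeneous 4 := by
  exact (((hmon 3 0 0 1 (by norm_num) (1 : ℂ)).add (hmon 2 1 0 1 (by norm_num) (-1 : ℂ))).add (hmon 2 0 1 1 (by norm_num) (-1 : ℂ))).add (hmon 2 0 0 2 (by norm_num) (1 : ℂ))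

lemma hQ1van (x : Fin 4 → ℂ) (hx : onSixLines x) : aeval x Q1 = 0 := by
  simp only [Q1, map_add, aeval_mon]
  rcases hx with (⟨h1,h2⟩|⟨h1,h2⟩|⟨h1,h2⟩|⟨h1,h2⟩|⟨h1,h2⟩|⟨h1,h2⟩) <;> rw [h1, h2] <;> ring

lemma hQ2hom : (Q2).IsHomogeneous 4 := by
  exact (hmon 2 1 0 1 (by norm_num) (-1 : ℂ)).add (hmon 1 2 1 0 (by norm_num) (1 : ℂ))

lemma hQ2van (x : Fin 4 → ℂ) (hx : onSixLines x) : aeval x Q2 = 0 := by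
  simp only [Q2, map_add, aeval_mon]
  rcases hx with (⟨h1,h2⟩|⟨h1,h2⟩|⟨h1,h2⟩|⟨h1,h2⟩|⟨h1,h2⟩|⟨h1,h2⟩) <;> rw [h1, h2] <;> ring

lemma hQ3hom : (Q3).IsHomogeneous 4 := by
  exact (hmon 2 0 1 1 (by norm_num) (-1 : ℂ)).add (hmon 1 1 2 0 (by norm_num) (1 : ℂ))

lemma hQ3van (x : Fin 4 → ℂ) (hx : onSixLines x) : aeval x Q3 = 0 := by
  simp only [Q3, map_add, aeval_mon]
  rcases hx with (⟨h1,h2⟩|⟨h1,h2⟩|⟨h1,h2⟩|⟨h1,h2⟩|⟨h1,h2⟩|⟨h1,h2⟩) <;> rw [h1, h2] <;> ring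

lemma hQ4hom : (Q4).IsHomogeneous 4 := by
  exact (((hmon 3 0 0 1 (by norm_num) (1 : ℂ)).add (hmon 2 1 0 1 (by norm_num) (-1 : ℂ))).add (hmon 2 0 1 1 (by norm_num) (-1 : ℂ))).add (hmon 1 1 1 1 (by norm_num) (1 : ℂ))

lemma hQ4van (x : Fin 4 → ℂ) (hx : onSixLines x) : aeval x Q4 = 0 := by
  simp only [Q4, map_add, aeval_mon]
  rcases hx with (⟨h1,h2⟩|⟨h1,h2⟩|⟨h1,h2⟩|⟨h1,h2⟩|⟨h1,h2⟩|⟨h1,h2⟩) <;> rw [h1, h2] <;> ring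

lemma hQ5hom : (Q5).IsHomogeneous 4 := by
  exact (((hmon 3 0 0 1 (by norm_num) (1 : ℂ)).add (hmon 2 0 1 1 (by norm_num) (-1 : ℂ))).add (hmon 1 2 0 1 (by norm_num) (-1 : ℂ))).add (hmon 1 1 0 2 (by norm_num) (1 : ℂ))

lemma hQ5van (x : Fin 4 → ℂ) (hx : onSixLines x) : aeval x Q5 = 0 := by
  simp only [Q5, map_add, aeval_mon]
  rcases hx with (⟨h1,h2⟩|⟨h1,h2⟩|⟨h1,h2⟩|⟨h1,h2⟩|⟨h1,h2⟩|⟨h1,h2⟩) <;> rw [h1, h2] <;> ring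

lemma hQ6hom : (Q6).IsHomogeneous 4 := by
  exact (((hmon 3 0 0 1 (by norm_num) (1 : ℂ)).add (hmon 2 1 0 1 (by norm_num) (-1 : ℂ))).add (hmon 1 0 2 1 (by norm_num) (-1 : ℂ))).add (hmon 1 0 1 2 (by norm_num) (1 : ℂ))

lemma hQ6van (x : Fin 4 → ℂ) (hx : onSixLines x) : aeval x Q6 = 0 := by
  simp only [Q6, map_add, aeval_mon]
  rcases hx with (⟨h1,h2⟩|⟨h1,h2⟩|⟨h1,h2⟩|⟨h1,h2⟩|⟨h1,h2⟩|⟨h1,h2⟩) <;> rw [h1, h2] <;> ring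

lemma hQ7hom : (Q7).IsHomogeneous 4 := by
  exact (((hmon 3 0 0 1 (by norm_num) (1 : ℂ)).add (hmon 1 2 0 1 (by norm_num) (-1 : ℂ))).add (hmon 1 0 2 1 (by norm_num) (-1 : ℂ))).add (hmon 1 0 0 3 (by norm_num) (1 : ℂ))

lemma hQ7van (x : Fin 4 → ℂ) (hx : onSixLines x) : aeval x Q7 = 0 := by
  simp only [Q7, map_add, aeval_mon]
  rcases hx with (⟨h1,h2⟩|⟨h1,h2⟩|⟨h1,h2⟩|⟨h1,h2⟩|⟨h1,h2⟩|⟨h1,h2⟩) <;> rw [h1, h2] <;> ring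

lemma hQ8hom : (Q8).IsHomogeneous 4 := by
  exact (hmon 1 2 0 1 (by norm_num) (-1 : ℂ)).add (hmon 0 3 1 0 (by norm_num) (1 : ℂ))

lemma hQ8van (x : Fin 4 → ℂ) (hx : onSixLines x) : aeval x Q8 = 0 := by
  simp only [Q8, map_add, aeval_mon]
  rcases hx with (⟨h1,h2⟩|⟨h1,h2⟩|⟨h1,h2⟩|⟨h1,h2⟩|⟨h1,h2⟩|⟨h1,h2⟩) <;> rw [h1, h2] <;> ring

lemma hQ9hom : (Q9).IsHomogeneous 4 := by
  exact (((hmon 3 0 0 1 (by norm_num) (1 : ℂ)).add (hmon 2 1 0 1 (by norm_num) (-1 : ℂ))).add (hmon 2 0 1 1 (by norm_num) (-1 : ℂ))).add (hmon 0 2 2 0 (by norm_num) (1 : ℂ))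

lemma hQ9van (x : Fin 4 → ℂ) (hx : onSixLines x) : aeval x Q9 = 0 := by
  simp only [Q9, map_add, aeval_mon]
  rcases hx with (⟨h1,h2⟩|⟨h1,h2⟩|⟨h1,h2⟩|⟨h1,h2⟩|⟨h1,h2⟩|⟨h1,h2⟩) <;> rw [h1, h2] <;> ring

lemma hQ10hom : (Q10).IsHomogeneous 4 := by
  exact (((hmon 3 0 0 1 (by norm_num) (1 : ℂ)).add (hmon 2 0 1 1 (by norm_num) (-1 : ℂ))).add (hmon 1 2 0 1 (by norm_num) (-1 : ℂ))).add (hmon 0 2 1 1 (by norm_num) (1 : ℂ))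

lemma hQ10van (x : Fin 4 → ℂ) (hx : onSixLines x) : aeval x Q10 = 0 := by
  simp only [Q10, map_add, aeval_mon]
  rcases hx with (⟨h1,h2⟩|⟨h1,h2⟩|⟨h1,h2⟩|⟨h1,h2⟩|⟨h1,h2⟩|⟨h1,h2⟩) <;> rw [h1, h2] <;> ring

lemma hQ11hom : (Q11).IsHomogeneous 4 := by
  exact (hmon 1 0 2 1 (by norm_num) (-1 : ℂ)).add (hmon 0 1 3 0 (by norm_num) (1 : ℂ))

lemma hQ11van (x : Fin 4 → ℂ) (hx : onSixLines x) : aeval x Q11 = 0 := by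
  simp only [Q11, map_add, aeval_mon]
  rcases hx with (⟨h1,h2⟩|⟨h1,h2⟩|⟨h1,h2⟩|⟨h1,h2⟩|⟨h1,h2⟩|⟨h1,h2⟩) <;> rw [h1, h2] <;> ring

lemma hQ12hom : (Q12).IsHomogeneous 4 := by
  exact (((hmon 3 0 0 1 (by norm_num) (1 : ℂ)).add (hmon 2 1 0 1 (by norm_num) (-1 : ℂ))).add (hmon 1 0 2 1 (by norm_num) (-1 : ℂ))).add (hmon 0 1 2 1 (by norm_num) (1 : ℂ))

lemma hQ12van (x : Fin 4 → ℂ) (hx : onSixLines x) : aeval x Q12 = 0 := by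
  simp only [Q12, map_add, aeval_mon]
  rcases hx with (⟨h1,h2⟩|⟨h1,h2⟩|⟨h1,h2⟩|⟨h1,h2⟩|⟨h1,h2⟩|⟨h1,h2⟩) <;> rw [h1, h2] <;> ring

lemma hQ13hom : (Q13).IsHomogeneous 4 := by
  exact (((hmon 3 0 0 1 (by norm_num) (1 : ℂ)).add (hmon 1 2 0 1 (by norm_num) (-1 : ℂ))).add (hmon 1 0 2 1 (by norm_num) (-1 : ℂ))).add (hmon 0 1 1 2 (by norm_num) (1 : ℂ))

lemma hQ13van (x : Fin 4 → ℂ) (hx : onSixLines x) : aeval x Q13 = 0 := by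
  simp only [Q13, map_add, aeval_mon]
  rcases hx with (⟨h1,h2⟩|⟨h1,h2⟩|⟨h1,h2⟩|⟨h1,h2⟩|⟨h1,h2⟩|⟨h1,h2⟩) <;> rw [h1, h2] <;> ring

lemma mem_quartics_iff (p : Pl) :
    p ∈ quarticsOnLines ↔ p.IsHomogeneous 4 ∧ ∀ x, onSixLines x → aeval x p = 0 := by
  rw [quarticsOnLines, Submodule.mem_inf, mem_homogeneousSubmodule]
  refine and_congr Iff.rfl ?_
  simp [Submodule.mem_iInf, LinearMap.mem_ker]

set_option maxHeartbeats 4000000 in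
lemma key (p : Pl) (hp : p.IsHomogeneous 4) (hv : ∀ x, onSixLines x → aeval x p = 0) :
    p = ∑ k : Fin 14, coeff (fm k) p • q k := by
  have E0 : aeval ![(1 : ℂ), 0, 0, 0] p = 0 := hv _ (by norm_num [onSixLines, Matrix.cons_val_two, Matrix.cons_val_three])
  rw [hexp hp] at E0
  norm_num [Matrix.cons_val_two, Matrix.cons_val_three] at E0
  have E1 : aeval ![(0 : ℂ), 0, 1, 0] p = 0 := hv _ (by norm_num [onSixLines, Matrix.cons_val_two, Matrix.cons_val_three])
  rw [hexp hp] at E1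
  norm_num [Matrix.cons_val_two, Matrix.cons_val_three] at E1
  have E2 : aeval ![(1 : ℂ), 0, 1, 0] p = 0 := hv _ (by norm_num [onSixLines, Matrix.cons_val_two, Matrix.cons_val_three])
  rw [hexp hp] at E2
  norm_num [Matrix.cons_val_two, Matrix.cons_val_three] at E2
  have E3 : aeval ![(1 : ℂ), 0, -1, 0] p = 0 := hv _ (by norm_num [onSixLines, Matrix.cons_val_two, Matrix.cons_val_three])
  rw [hexp hp] at E3
  norm_num [Matrix.cons_val_two, Matrix.cons_val_three] at E3
  have E4 : aeval ![(2 : ℂ), 0, 1, 0] p = 0 := hv _ (by norm_num [onSixLines, Matrix.cons_val_two, Matrix.cons_val_three])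
  rw [hexp hp] at E4
  norm_num [Matrix.cons_val_two, Matrix.cons_val_three] at E4
  have E5 : aeval ![(0 : ℂ), 1, 0, 0] p = 0 := hv _ (by norm_num [onSixLines, Matrix.cons_val_two, Matrix.cons_val_three])
  rw [hexp hp] at E5
  norm_num [Matrix.cons_val_two, Matrix.cons_val_three] at E5
  have E6 : aeval ![(0 : ℂ), 0, 0, 1] p = 0 := hv _ (by norm_num [onSixLines, Matrix.cons_val_two, Matrix.cons_val_three])
  rw [hexp hp] at E6
  norm_num [Matrix.cons_val_two, Matrix.cons_val_three] at E6
  have E7 : aeval ![(0 : ℂ), 1, 0, 1] p = 0 := hv _ (by norm_num [onSixLines, Matrix.cons_val_two, Matrix.cons_val_three])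
  rw [hexp hp] at E7
  norm_num [Matrix.cons_val_two, Matrix.cons_val_three] at E7
  have E8 : aeval ![(0 : ℂ), 1, 0, -1] p = 0 := hv _ (by norm_num [onSixLines, Matrix.cons_val_two, Matrix.cons_val_three])
  rw [hexp hp] at E8
  norm_num [Matrix.cons_val_two, Matrix.cons_val_three] at E8
  have E9 : aeval ![(0 : ℂ), 2, 0, 1] p = 0 := hv _ (by norm_num [onSixLines, Matrix.cons_val_two, Matrix.cons_val_three])
  rw [hexp hp] at E9
  norm_num [Matrix.cons_val_two, Matrix.cons_val_three] at E9
  have E10 : aeval ![(0 : ℂ), 0, 1, 0] p = 0 := hv _ (by norm_num [onSixLines, Matrix.cons_val_two, Matrix.cons_val_three])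
  rw [hexp hp] at E10
  norm_num [Matrix.cons_val_two, Matrix.cons_val_three] at E10
  have E11 : aeval ![(0 : ℂ), 0, 0, 1] p = 0 := hv _ (by norm_num [onSixLines, Matrix.cons_val_two, Matrix.cons_val_three])
  rw [hexp hp] at E11
  norm_num [Matrix.cons_val_two, Matrix.cons_val_three] at E11
  have E12 : aeval ![(0 : ℂ), 0, 1, 1] p = 0 := hv _ (by norm_num [onSixLines, Matrix.cons_val_two, Matrix.cons_val_three])
  rw [hexp hp] at E12
  norm_num [Matrix.cons_val_two, Matrix.cons_val_three] at E12
  have E13 : aeval ![(0 : ℂ), 0, 1, -1] p = 0 := hv _ (by norm_num [onSixLines, Matrix.cons_val_two, Matrix.cons_val_three])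
  rw [hexp hp] at E13
  norm_num [Matrix.cons_val_two, Matrix.cons_val_three] at E13
  have E14 : aeval ![(0 : ℂ), 0, 2, 1] p = 0 := hv _ (by norm_num [onSixLines, Matrix.cons_val_two, Matrix.cons_val_three])
  rw [hexp hp] at E14
  norm_num [Matrix.cons_val_two, Matrix.cons_val_three] at E14
  have E15 : aeval ![(1 : ℂ), 0, 0, 0] p = 0 := hv _ (by norm_num [onSixLines, Matrix.cons_val_two, Matrix.cons_val_three])
  rw [hexp hp] at E15
  norm_num [Matrix.cons_val_two, Matrix.cons_val_three] at E15
  have E16 : aeval ![(0 : ℂ), 1, 0, 0] p = 0 := hv _ (by norm_num [onSixLines, Matrix.cons_val_two, Matrix.cons_val_three])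
  rw [hexp hp] at E16
  norm_num [Matrix.cons_val_two, Matrix.cons_val_three] at E16
  have E17 : aeval ![(1 : ℂ), 1, 0, 0] p = 0 := hv _ (by norm_num [onSixLines, Matrix.cons_val_two, Matrix.cons_val_three])
  rw [hexp hp] at E17
  norm_num [Matrix.cons_val_two, Matrix.cons_val_three] at E17
  have E18 : aeval ![(1 : ℂ), -1, 0, 0] p = 0 := hv _ (by norm_num [onSixLines, Matrix.cons_val_two, Matrix.cons_val_three])
  rw [hexp hp] at E18
  norm_num [Matrix.cons_val_two, Matrix.cons_val_three] at E18
  have E19 : aeval ![(2 : ℂ), 1, 0, 0] p = 0 := hv _ (by norm_num [onSixLines, Matrix.cons_val_two, Matrix.cons_val_three])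
  rw [hexp hp] at E19
  norm_num [Matrix.cons_val_two, Matrix.cons_val_three] at E19
  have E20 : aeval ![(1 : ℂ), 0, 1, 0] p = 0 := hv _ (by norm_num [onSixLines, Matrix.cons_val_two, Matrix.cons_val_three])
  rw [hexp hp] at E20
  norm_num [Matrix.cons_val_two, Matrix.cons_val_three] at E20
  have E21 : aeval ![(0 : ℂ), 1, 0, 1] p = 0 := hv _ (by norm_num [onSixLines, Matrix.cons_val_two, Matrix.cons_val_three])
  rw [hexp hp] at E21
  norm_num [Matrix.cons_val_two, Matrix.cons_val_three] at E21
  have E22 : aeval ![(1 : ℂ), 1, 1, 1] p = 0 := hv _ (by norm_num [onSixLines, Matrix.cons_val_two, Matrix.cons_val_three])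
  rw [hexp hp] at E22
  norm_num [Matrix.cons_val_two, Matrix.cons_val_three] at E22
  have E23 : aeval ![(1 : ℂ), -1, 1, -1] p = 0 := hv _ (by norm_num [onSixLines, Matrix.cons_val_two, Matrix.cons_val_three])
  rw [hexp hp] at E23
  norm_num [Matrix.cons_val_two, Matrix.cons_val_three] at E23
  have E24 : aeval ![(2 : ℂ), 1, 2, 1] p = 0 := hv _ (by norm_num [onSixLines, Matrix.cons_val_two, Matrix.cons_val_three])
  rw [hexp hp] at E24
  norm_num [Matrix.cons_val_two, Matrix.cons_val_three] at E24
  have E25 : aeval ![(1 : ℂ), 1, 0, 0] p = 0 := hv _ (by norm_num [onSixLines, Matrix.cons_val_two, Matrix.cons_val_three])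
  rw [hexp hp] at E25
  norm_num [Matrix.cons_val_two, Matrix.cons_val_three] at E25
  have E26 : aeval ![(0 : ℂ), 0, 1, 1] p = 0 := hv _ (by norm_num [onSixLines, Matrix.cons_val_two, Matrix.cons_val_three])
  rw [hexp hp] at E26
  norm_num [Matrix.cons_val_two, Matrix.cons_val_three] at E26
  have E27 : aeval ![(1 : ℂ), 1, 1, 1] p = 0 := hv _ (by norm_num [onSixLines, Matrix.cons_val_two, Matrix.cons_val_three])
  rw [hexp hp] at E27
  norm_num [Matrix.cons_val_two, Matrix.cons_val_three] at E27
  have E28 : aeval ![(1 : ℂ), 1, -1, -1] p = 0 := hv _ (by norm_num [onSixLines, Matrix.cons_val_two, Matrix.cons_val_three])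
  rw [hexp hp] at E28
  norm_num [Matrix.cons_val_two, Matrix.cons_val_three] at E28
  have E29 : aeval ![(2 : ℂ), 2, 1, 1] p = 0 := hv _ (by norm_num [onSixLines, Matrix.cons_val_two, Matrix.cons_val_three])
  rw [hexp hp] at E29
  norm_num [Matrix.cons_val_two, Matrix.cons_val_three] at E29
  have R0 : coeff (e 4 0 0 0) p = 0 := by
    linear_combination (1 : ℂ) * E0
  have R1 : coeff (e 3 1 0 0) p = 0 := by
    linear_combination (-2 : ℂ) * E0 + ((1 : ℂ)/2) * E5 + ((-1 : ℂ)/2) * E17 + ((-1 : ℂ)/6) * E18 + ((1 : ℂ)/6) * E19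
  have R2 : coeff (e 3 0 1 0) p = 0 := by
    linear_combination (-2 : ℂ) * E0 + ((1 : ℂ)/2) * E1 + ((-1 : ℂ)/2) * E2 + ((-1 : ℂ)/6) * E3 + ((1 : ℂ)/6) * E4
  have R3 : coeff (e 3 0 0 1) p = -coeff (e 2 1 1 0) p + coeff (e 2 0 0 2) p + coeff (e 1 1 1 1) p + coeff (e 1 1 0 2) p + coeff (e 1 0 1 2) p + coeff (e 1 0 0 3) p + coeff (e 0 2 2 0) p + coeff (e 0 2 1 1) p + coeff (e 0 1 2 1) p + coeff (e 0 1 1 2) p := by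
    linear_combination (3 : ℂ) * E0 + ((1 : ℂ)/2) * E1 + ((-1 : ℂ)/2) * E2 + ((1 : ℂ)/6) * E3 + ((-1 : ℂ)/6) * E4 + ((1 : ℂ)/2) * E5 + (-2 : ℂ) * E6 + (2 : ℂ) * E7 + ((1 : ℂ)/6) * E8 + ((-1 : ℂ)/6) * E9 + (2 : ℂ) * E12 + ((1 : ℂ)/6) * E13 + ((-1 : ℂ)/6) * E14 + ((-1 : ℂ)/2) * E17 + ((1 : ℂ)/6) * E18 + ((-1 : ℂ)/6) * E19 + (-2 : ℂ) * E22 + ((-1 : ℂ)/6) * E23 + ((1 : ℂ)/6) * E24 + ((-1 : ℂ)/6) * E28 + ((1 : ℂ)/6) * E29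
  have R4 : coeff (e 2 2 0 0) p = 0 := by
    linear_combination (-1 : ℂ) * E0 + (-1 : ℂ) * E5 + ((1 : ℂ)/2) * E17 + ((1 : ℂ)/2) * E18
  have R5 : coeff (e 2 1 0 1) p = -coeff (e 2 0 0 2) p - coeff (e 1 2 1 0) p - coeff (e 1 1 1 1) p - coeff (e 1 0 1 2) p - coeff (e 0 2 2 0) p - coeff (e 0 1 2 1) p := by
    linear_combination (1 : ℂ) * E0 + (1 : ℂ) * E1 + (-1 : ℂ) * E2 + (1 : ℂ) * E5 + (1 : ℂ) * E6 + (-1 : ℂ) * E7 + ((-1 : ℂ)/2) * E12 + ((-1 : ℂ)/2) * E13 + ((-1 : ℂ)/2) * E17 + ((-1 : ℂ)/2) * E18 + ((1 : ℂ)/2) * E22 + ((1 : ℂ)/2) * E23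
  have R6 : coeff (e 2 0 2 0) p = 0 := by
    linear_combination (-1 : ℂ) * E0 + (-1 : ℂ) * E1 + ((1 : ℂ)/2) * E2 + ((1 : ℂ)/2) * E3
  have R7 : coeff (e 2 0 1 1) p = -coeff (e 2 0 0 2) p - coeff (e 1 1 2 0) p - coeff (e 1 1 1 1) p - coeff (e 1 1 0 2) p - coeff (e 0 2 2 0) p - coeff (e 0 2 1 1) p := by
    linear_combination (1 : ℂ) * E0 + (1 : ℂ) * E1 + ((-1 : ℂ)/2) * E2 + ((-1 : ℂ)/2) * E3 + (1 : ℂ) * E5 + (1 : ℂ) * E6 + ((-1 : ℂ)/2) * E7 + ((-1 : ℂ)/2) * E8 + (-1 : ℂ) * E12 + (-1 : ℂ) * E17 + ((1 : ℂ)/2) * E22 + ((1 : ℂ)/2) * E28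
  have R8 : coeff (e 1 3 0 0) p = 0 := by
    linear_combination (2 : ℂ) * E0 + ((-1 : ℂ)/2) * E5 + (1 : ℂ) * E17 + ((-1 : ℂ)/3) * E18 + ((-1 : ℂ)/6) * E19
  have R9 : coeff (e 1 2 0 1) p = -coeff (e 1 1 0 2) p - coeff (e 1 0 0 3) p - coeff (e 0 3 1 0) p - coeff (e 0 2 1 1) p - coeff (e 0 1 1 2) p := by
    linear_combination (-2 : ℂ) * E0 + (-2 : ℂ) * E1 + (2 : ℂ) * E2 + ((1 : ℂ)/2) * E5 + ((1 : ℂ)/2) * E6 + ((-1 : ℂ)/2) * E7 + (-1 : ℂ) * E12 + ((1 : ℂ)/3) * E13 + ((1 : ℂ)/6) * E14 + (-1 : ℂ) * E17 + ((1 : ℂ)/3) * E18 + ((1 : ℂ)/6) * E19 + (1 : ℂ) * E22 + ((-1 : ℂ)/3) * E23 + ((-1 : ℂ)/6) * E24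
  have R10 : coeff (e 1 0 3 0) p = 0 := by
    linear_combination (2 : ℂ) * E0 + ((-1 : ℂ)/2) * E1 + (1 : ℂ) * E2 + ((-1 : ℂ)/3) * E3 + ((-1 : ℂ)/6) * E4
  have R11 : coeff (e 1 0 2 1) p = -coeff (e 1 0 1 2) p - coeff (e 1 0 0 3) p - coeff (e 0 1 3 0) p - coeff (e 0 1 2 1) p - coeff (e 0 1 1 2) p := by
    linear_combination (-2 : ℂ) * E0 + ((1 : ℂ)/2) * E1 + (-1 : ℂ) * E2 + ((1 : ℂ)/3) * E3 + ((1 : ℂ)/6) * E4 + (-2 : ℂ) * E5 + ((1 : ℂ)/2) * E6 + (-1 : ℂ) * E7 + ((1 : ℂ)/3) * E8 + ((1 : ℂ)/6) * E9 + ((-1 : ℂ)/2) * E12 + (2 : ℂ) * E17 + (1 : ℂ) * E22 + ((-1 : ℂ)/3) * E28 + ((-1 : ℂ)/6) * E29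
  have R12 : coeff (e 0 4 0 0) p = 0 := by
    linear_combination (1 : ℂ) * E5
  have R13 : coeff (e 0 3 0 1) p = 0 := by
    linear_combination (-2 : ℂ) * E5 + ((1 : ℂ)/2) * E6 + ((-1 : ℂ)/2) * E7 + ((-1 : ℂ)/6) * E8 + ((1 : ℂ)/6) * E9
  have R14 : coeff (e 0 2 0 2) p = 0 := by
    linear_combination (-1 : ℂ) * E5 + (-1 : ℂ) * E6 + ((1 : ℂ)/2) * E7 + ((1 : ℂ)/2) * E8
  have R15 : coeff (e 0 1 0 3) p = 0 := by
    linear_combination (2 : ℂ) * E5 + ((-1 : ℂ)/2) * E6 + (1 : ℂ) * E7 + ((-1 : ℂ)/3) * E8 + ((-1 : ℂ)/6) * E9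
  have R16 : coeff (e 0 0 4 0) p = 0 := by
    linear_combination (1 : ℂ) * E1
  have R17 : coeff (e 0 0 3 1) p = 0 := by
    linear_combination (-2 : ℂ) * E1 + ((1 : ℂ)/2) * E6 + ((-1 : ℂ)/2) * E12 + ((-1 : ℂ)/6) * E13 + ((1 : ℂ)/6) * E14
  have R18 : coeff (e 0 0 2 2) p = 0 := by
    linear_combination (-1 : ℂ) * E1 + (-1 : ℂ) * E6 + ((1 : ℂ)/2) * E12 + ((1 : ℂ)/2) * E13
  have R19 : coeff (e 0 0 1 3) p = 0 := by
    linear_combination (2 : ℂ) * E1 + ((-1 : ℂ)/2) * E6 + (1 : ℂ) * E12 + ((-1 : ℂ)/3) * E13 + ((-1 : ℂ)/6) * E14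
  have R20 : coeff (e 0 0 0 4) p = 0 := by
    linear_combination (1 : ℂ) * E6
  conv_lhs => rw [hrep hp]
  simp only [Fin.sum_univ_succ, Finset.univ_eq_empty, Finset.sum_empty, mexp,
    v0, v1, v2, v3, fm, q, Q0, Q1, Q2, Q3, Q4, Q5, Q6, Q7, Q8, Q9, Q10, Q11, Q12, Q13,
    Matrix.cons_val_zero, Matrix.cons_val_one, Matrix.head_cons, Matrix.cons_val_succ,
    add_zero, smul_eq_C_mul, mon_eq]
  rw [R0, R1, R2, R3, R4, R5, R6, R7, R8, R9, R10, R11, R12, R13, R14, R15, R16, R17, R18, R19, R20]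
  simp only [map_add, map_sub, map_neg, map_zero, C_1]
  ring

set_option maxHeartbeats 1000000 in
lemma li : LinearIndependent ℂ q := by
  rw [Fintype.linearIndependent_iff]
  intro g hg
  have H : ∀ m : Fin 4 →₀ ℕ, coeff m (∑ k : Fin 14, g k • q k) = 0 := by
    rw [hg]; simp
  intro i
  fin_cases i
  · have Hk := H (e 2 1 1 0)
    simp only [Fin.sum_univ_succ, Finset.univ_eq_empty, Finset.sum_empty, add_zero, q,
      Matrix.cons_val_zero, Matrix.cons_val_one, Matrix.head_cons, Matrix.cons_val_succ,
      Q0, Q1, Q2, Q3, Q4, Q5, Q6, Q7, Q8, Q9, Q10, Q11, Q12, Q13, coeff_add, coeff_smul, coeff_e_mon,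
      smul_eq_mul] at Hk
    norm_num at Hk
    simpa using Hk
  · have Hk := H (e 2 0 0 2)
    simp only [Fin.sum_univ_succ, Finset.univ_eq_empty, Finset.sum_empty, add_zero, q,
      Matrix.cons_val_zero, Matrix.cons_val_one, Matrix.head_cons, Matrix.cons_val_succ,
      Q0, Q1, Q2, Q3, Q4, Q5, Q6, Q7, Q8, Q9, Q10, Q11, Q12, Q13, coeff_add, coeff_smul, coeff_e_mon,
      smul_eq_mul] at Hk
    norm_num at Hk
    simpa using Hk
  · have Hk := H (e 1 2 1 0)
    simp only [Fin.sum_univ_succ, Finset.univ_eq_empty, Finset.sum_empty, add_zero, q,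
      Matrix.cons_val_zero, Matrix.cons_val_one, Matrix.head_cons, Matrix.cons_val_succ,
      Q0, Q1, Q2, Q3, Q4, Q5, Q6, Q7, Q8, Q9, Q10, Q11, Q12, Q13, coeff_add, coeff_smul, coeff_e_mon,
      smul_eq_mul] at Hk
    norm_num at Hk
    simpa using Hk
  · have Hk := H (e 1 1 2 0)
    simp only [Fin.sum_univ_succ, Finset.univ_eq_empty, Finset.sum_empty, add_zero, q,
      Matrix.cons_val_zero, Matrix.cons_val_one, Matrix.head_cons, Matrix.cons_val_succ,
      Q0, Q1, Q2, Q3, Q4, Q5, Q6, Q7, Q8, Q9, Q10, Q11, Q12, Q13, coeff_add, coeff_smul, coeff_e_mon,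
      smul_eq_mul] at Hk
    norm_num at Hk
    simpa using Hk
  · have Hk := H (e 1 1 1 1)
    simp only [Fin.sum_univ_succ, Finset.univ_eq_empty, Finset.sum_empty, add_zero, q,
      Matrix.cons_val_zero, Matrix.cons_val_one, Matrix.head_cons, Matrix.cons_val_succ,
      Q0, Q1, Q2, Q3, Q4, Q5, Q6, Q7, Q8, Q9, Q10, Q11, Q12, Q13, coeff_add, coeff_smul, coeff_e_mon,
      smul_eq_mul] at Hk
    norm_num at Hk
    simpa using Hk
  · have Hk := H (e 1 1 0 2)
    simp only [Fin.sum_univ_succ, Finset.univ_eq_empty, Finset.sum_empty, add_zero, q,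
      Matrix.cons_val_zero, Matrix.cons_val_one, Matrix.head_cons, Matrix.cons_val_succ,
      Q0, Q1, Q2, Q3, Q4, Q5, Q6, Q7, Q8, Q9, Q10, Q11, Q12, Q13, coeff_add, coeff_smul, coeff_e_mon,
      smul_eq_mul] at Hk
    norm_num at Hk
    simpa using Hk
  · have Hk := H (e 1 0 1 2)
    simp only [Fin.sum_univ_succ, Finset.univ_eq_empty, Finset.sum_empty, add_zero, q,
      Matrix.cons_val_zero, Matrix.cons_val_one, Matrix.head_cons, Matrix.cons_val_succ,
      Q0, Q1, Q2, Q3, Q4, Q5, Q6, Q7, Q8, Q9, Q10, Q11, Q12, Q13, coeff_add, coeff_smul, coeff_e_mon,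
      smul_eq_mul] at Hk
    norm_num at Hk
    simpa using Hk
  · have Hk := H (e 1 0 0 3)
    simp only [Fin.sum_univ_succ, Finset.univ_eq_empty, Finset.sum_empty, add_zero, q,
      Matrix.cons_val_zero, Matrix.cons_val_one, Matrix.head_cons, Matrix.cons_val_succ,
      Q0, Q1, Q2, Q3, Q4, Q5, Q6, Q7, Q8, Q9, Q10, Q11, Q12, Q13, coeff_add, coeff_smul, coeff_e_mon,
      smul_eq_mul] at Hk
    norm_num at Hk
    simpa using Hk
  · have Hk := H (e 0 3 1 0)
    simp only [Fin.sum_univ_succ, Finset.univ_eq_empty, Finset.sum_empty, add_zero, q,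
      Matrix.cons_val_zero, Matrix.cons_val_one, Matrix.head_cons, Matrix.cons_val_succ,
      Q0, Q1, Q2, Q3, Q4, Q5, Q6, Q7, Q8, Q9, Q10, Q11, Q12, Q13, coeff_add, coeff_smul, coeff_e_mon,
      smul_eq_mul] at Hk
    norm_num at Hk
    simpa using Hk
  · have Hk := H (e 0 2 2 0)
    simp only [Fin.sum_univ_succ, Finset.univ_eq_empty, Finset.sum_empty, add_zero, q,
      Matrix.cons_val_zero, Matrix.cons_val_one, Matrix.head_cons, Matrix.cons_val_succ,
      Q0, Q1, Q2, Q3, Q4, Q5, Q6, Q7, Q8, Q9, Q10, Q11, Q12, Q13, coeff_add, coeff_smul, coeff_e_mon,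
      smul_eq_mul] at Hk
    norm_num at Hk
    simpa using Hk
  · have Hk := H (e 0 2 1 1)
    simp only [Fin.sum_univ_succ, Finset.univ_eq_empty, Finset.sum_empty, add_zero, q,
      Matrix.cons_val_zero, Matrix.cons_val_one, Matrix.head_cons, Matrix.cons_val_succ,
      Q0, Q1, Q2, Q3, Q4, Q5, Q6, Q7, Q8, Q9, Q10, Q11, Q12, Q13, coeff_add, coeff_smul, coeff_e_mon,
      smul_eq_mul] at Hk
    norm_num at Hk
    simpa using Hk
  · have Hk := H (e 0 1 3 0)
    simp only [Fin.sum_univ_succ, Finset.univ_eq_empty, Finset.sum_empty, add_zero, q,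
      Matrix.cons_val_zero, Matrix.cons_val_one, Matrix.head_cons, Matrix.cons_val_succ,
      Q0, Q1, Q2, Q3, Q4, Q5, Q6, Q7, Q8, Q9, Q10, Q11, Q12, Q13, coeff_add, coeff_smul, coeff_e_mon,
      smul_eq_mul] at Hk
    norm_num at Hk
    simpa using Hk
  · have Hk := H (e 0 1 2 1)
    simp only [Fin.sum_univ_succ, Finset.univ_eq_empty, Finset.sum_empty, add_zero, q,
      Matrix.cons_val_zero, Matrix.cons_val_one, Matrix.head_cons, Matrix.cons_val_succ,
      Q0, Q1, Q2, Q3, Q4, Q5, Q6, Q7, Q8, Q9, Q10, Q11, Q12, Q13, coeff_add, coeff_smul, coeff_e_mon,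
      smul_eq_mul] at Hk
    norm_num at Hk
    simpa using Hk
  · have Hk := H (e 0 1 1 2)
    simp only [Fin.sum_univ_succ, Finset.univ_eq_empty, Finset.sum_empty, add_zero, q,
      Matrix.cons_val_zero, Matrix.cons_val_one, Matrix.head_cons, Matrix.cons_val_succ,
      Q0, Q1, Q2, Q3, Q4, Q5, Q6, Q7, Q8, Q9, Q10, Q11, Q12, Q13, coeff_add, coeff_smul, coeff_e_mon,
      smul_eq_mul] at Hk
    norm_num at Hk
    simpa using Hk

end

end Stmt15Aux

open Stmt15Aux in
theorem stmt_15 : Module.finrank ℂ quarticsOnLines = 14 := by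
  have hspan : quarticsOnLines = Submodule.span ℂ (Set.range q) := by
    apply le_antisymm
    · intro p hp
      obtain ⟨h1, h2⟩ := (mem_quartics_iff p).mp hp
      rw [key p h1 h2]
      exact Submodule.sum_mem _ fun k _ =>
        Submodule.smul_mem _ _ (Submodule.subset_span ⟨k, rfl⟩)
    · rw [Submodule.span_le]
      rintro _ ⟨k, rfl⟩
      fin_cases k
      · exact (mem_quartics_iff Q0).mpr ⟨hQ0hom, hQ0van⟩
      · exact (mem_quartics_iff Q1).mpr ⟨hQ1hom, hQ1van⟩
      · exact (mem_quartics_iff Q2).mpr ⟨hQ2hom, hQ2van⟩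
      · exact (mem_quartics_iff Q3).mpr ⟨hQ3hom, hQ3van⟩
      · exact (mem_quartics_iff Q4).mpr ⟨hQ4hom, hQ4van⟩
      · exact (mem_quartics_iff Q5).mpr ⟨hQ5hom, hQ5van⟩
      · exact (mem_quartics_iff Q6).mpr ⟨hQ6hom, hQ6van⟩
      · exact (mem_quartics_iff Q7).mpr ⟨hQ7hom, hQ7van⟩
      · exact (mem_quartics_iff Q8).mpr ⟨hQ8hom, hQ8van⟩
      · exact (mem_quartics_iff Q9).mpr ⟨hQ9hom, hQ9van⟩
      · exact (mem_quartics_iff Q10).mpr ⟨hQ10hom, hQ10van⟩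
      · exact (mem_quartics_iff Q11).mpr ⟨hQ11hom, hQ11van⟩
      · exact (mem_quartics_iff Q12).mpr ⟨hQ12hom, hQ12van⟩
      · exact (mem_quartics_iff Q13).mpr ⟨hQ13hom, hQ13van⟩
  rw [hspan, finrank_span_eq_card li, Fintype.card_fin]
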